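/- arXiv:2007.13365 — 2 statements merged into one kernel-verified Lean document; each statement's English description precedes it below -/
import Mathlib

section
/- For every 3d partition λ, the rational function H_λ(z) := (z−χ)⁻¹ · ∏_{□∈λ} ∏_{t=1,2,3} (z − x_□ + ℏ_t)/(z − x_□ − ℏ_t) ∈ K(z) has all of its poles among the weights of the addible and removable boxes of λ, and all of these poles are simple; equivalently, H_λ(z) · ∏_{■ ∈ Add(λ) ∪ Rem(λ)} (z − x_■) is a polynomial in K[z]. -/
/-- A box in `ℕ³`. -/
abbrev Box3 : Type := ℕ × ℕ × ℕ

/-- A set of boxes is downward closed; a 3d partition is a finite downward closed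
subset of `ℕ³`. -/
def IsDownwardClosed (S : Set Box3) : Prop :=
  ∀ b ∈ S, ∀ b' : Box3, b'.1 ≤ b.1 → b'.2.1 ≤ b.2.1 → b'.2.2 ≤ b.2.2 → b' ∈ S

/-- The field `K = ℚ(ℏ₁, ℏ₂, χ)` of rational functions in three indeterminates. -/
abbrev KK : Type := FractionRing (MvPolynomial (Fin 3) ℚ)

/-- The equivariant parameter `ℏ₁`. -/
noncomputable def hb1 : KK := algebraMap (MvPolynomial (Fin 3) ℚ) KK (MvPolynomial.X 0)

/-- The equivariant parameter `ℏ₂`. -/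
noncomputable def hb2 : KK := algebraMap (MvPolynomial (Fin 3) ℚ) KK (MvPolynomial.X 1)

/-- The equivariant parameter `ℏ₃ := −ℏ₁ − ℏ₂` (so `ℏ₁ + ℏ₂ + ℏ₃ = 0`). -/
noncomputable def hb3 : KK := -hb1 - hb2

/-- The framing parameter `χ`. -/
noncomputable def chiK : KK := algebraMap (MvPolynomial (Fin 3) ℚ) KK (MvPolynomial.X 2)

/-- The three parameters `ℏ₁, ℏ₂, ℏ₃` as a function on `Fin 3`. -/
noncomputable def hbar : Fin 3 → KK := ![hb1, hb2, hb3]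

/-- The weight `x_□ = χ + i·ℏ₁ + j·ℏ₂ + k·ℏ₃` of a box `□ = (i,j,k)`. -/
noncomputable def boxWeight (b : Box3) : KK :=
  chiK + (b.1 : KK) * hb1 + (b.2.1 : KK) * hb2 + (b.2.2 : KK) * hb3

/-- The set of addible boxes of `λ`: boxes `■ ∉ λ` with `λ ∪ {■}` downward closed. -/
def AddBoxes (lam : Finset Box3) : Set Box3 :=
  { b | b ∉ lam ∧ IsDownwardClosed (↑(insert b lam) : Set Box3) }

/-- The set of removable boxes of `λ`: boxes `■ ∈ λ` with `λ \ {■}` downward closed. -/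
def RemBoxes (lam : Finset Box3) : Set Box3 :=
  { b | b ∈ lam ∧ IsDownwardClosed (↑(lam.erase b) : Set Box3) }

/-- `H_λ(z) = (z−χ)⁻¹ · ∏_{□∈λ} ∏_{t=1,2,3} (z − x_□ + ℏ_t)/(z − x_□ − ℏ_t) ∈ K(z)`. -/
noncomputable def Hfun (lam : Finset Box3) : RatFunc KK :=
  (RatFunc.X - RatFunc.C chiK)⁻¹ *
    ∏ b ∈ lam, ∏ t : Fin 3,
      (RatFunc.X - RatFunc.C (boxWeight b) + RatFunc.C (hbar t)) /
        (RatFunc.X - RatFunc.C (boxWeight b) - RatFunc.C (hbar t))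

namespace HPoles

set_option maxHeartbeats 2000000
set_option synthInstance.maxHeartbeats 1000000

open Finset

/-- The diagonal of a box. -/
def dg (b : Box3) : ℤ × ℤ := ((b.1 : ℤ) - (b.2.2 : ℤ), (b.2.1 : ℤ) - (b.2.2 : ℤ))

/-- The weight of a diagonal. -/
noncomputable def wz (p : ℤ × ℤ) : KK := chiK + (p.1 : KK) * hb1 + (p.2 : KK) * hb2

lemma wz_zero : wz (0, 0) = chiK := by simp [wz]

lemma boxWeight_eq (b : Box3) : boxWeight b = wz (dg b) := by
  simp only [boxWeight, wz, dg, hb3]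
  push_cast
  ring

/-- The linear factor attached to a diagonal. -/
noncomputable def fK (p : ℤ × ℤ) : RatFunc KK := RatFunc.X - RatFunc.C (wz p)

lemma fK_eq (p : ℤ × ℤ) :
    fK p = algebraMap (Polynomial KK) (RatFunc KK) (Polynomial.X - Polynomial.C (wz p)) := by
  rw [map_sub, RatFunc.algebraMap_X, RatFunc.algebraMap_C, fK]

lemma fK_ne (p : ℤ × ℤ) : fK p ≠ 0 := by
  rw [fK_eq]
  exact RatFunc.algebraMap_ne_zero (Polynomial.X_sub_C_ne_zero _)

/-- Multiplicative interpretation of a divisor. -/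
noncomputable def Phi (m : (ℤ × ℤ) →₀ ℤ) : RatFunc KK := m.prod fun p e => fK p ^ e

lemma Phi_add (m n : (ℤ × ℤ) →₀ ℤ) : Phi (m + n) = Phi m * Phi n :=
  Finsupp.prod_add_index' (fun p => zpow_zero _) (fun p a b => zpow_add₀ (fK_ne p) a b)

lemma Phi_zero : Phi 0 = 1 := Finsupp.prod_zero_index

lemma Phi_single (p : ℤ × ℤ) (e : ℤ) : Phi (Finsupp.single p e) = fK p ^ e :=
  Finsupp.prod_single_index (zpow_zero _)

lemma Phi_neg (m : (ℤ × ℤ) →₀ ℤ) : Phi (-m) = (Phi m)⁻¹ := by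
  have h : Phi (-m) * Phi m = 1 := by rw [← Phi_add, neg_add_cancel, Phi_zero]
  exact eq_inv_of_mul_eq_one_left h

lemma Phi_sub (m n : (ℤ × ℤ) →₀ ℤ) : Phi (m - n) = Phi m * (Phi n)⁻¹ := by
  rw [sub_eq_add_neg, Phi_add, Phi_neg]

lemma Phi_sum {ι : Type*} (s : Finset ι) (g : ι → (ℤ × ℤ) →₀ ℤ) :
    Phi (∑ i ∈ s, g i) = ∏ i ∈ s, Phi (g i) := by
  classical
  induction s using Finset.induction_on with
  | empty => simp [Phi_zero]
  | insert a s h ih => rw [Finset.sum_insert h, Finset.prod_insert h, Phi_add, ih]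

/-- The divisor of the product over one box. -/
noncomputable def mB (b : Box3) : (ℤ × ℤ) →₀ ℤ :=
  Finsupp.single (dg b + (-1, 0)) 1 + Finsupp.single (dg b + (0, -1)) 1
    + Finsupp.single (dg b + (1, 1)) 1
    - Finsupp.single (dg b + (1, 0)) 1 - Finsupp.single (dg b + (0, 1)) 1
    - Finsupp.single (dg b + (-1, -1)) 1

lemma wz_add (p r : ℤ × ℤ) : wz (p + r) = wz p + ((r.1 : KK) * hb1 + (r.2 : KK) * hb2) := by
  simp only [wz, Prod.fst_add, Prod.snd_add]
  push_cast
  ring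

lemma fK_add (b : Box3) (r : ℤ × ℤ) :
    fK (dg b + r) = RatFunc.X - RatFunc.C (boxWeight b)
      - RatFunc.C ((r.1 : KK) * hb1 + (r.2 : KK) * hb2) := by
  rw [fK, boxWeight_eq, wz_add, map_add]
  ring

lemma box_factor (b : Box3) :
    (∏ t : Fin 3, (RatFunc.X - RatFunc.C (boxWeight b) + RatFunc.C (hbar t)) /
      (RatFunc.X - RatFunc.C (boxWeight b) - RatFunc.C (hbar t))) = Phi (mB b) := by
  have h1 : hbar 0 = hb1 := by simp [hbar]
  have h2 : hbar 1 = hb2 := by simp [hbar]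
  have h3 : hbar 2 = hb3 := by simp [hbar]
  have n1 : RatFunc.X - RatFunc.C (boxWeight b) + RatFunc.C (hbar 0) = fK (dg b + (-1, 0)) := by
    rw [h1, fK_add]
    rw [show ((((-1 : ℤ), (0 : ℤ)).1 : KK) * hb1 + (((-1 : ℤ), (0 : ℤ)).2 : KK) * hb2) = -hb1 by
      push_cast; ring]
    rw [map_neg]; ring
  have n2 : RatFunc.X - RatFunc.C (boxWeight b) + RatFunc.C (hbar 1) = fK (dg b + (0, -1)) := by
    rw [h2, fK_add]
    rw [show ((((0 : ℤ), (-1 : ℤ)).1 : KK) * hb1 + (((0 : ℤ), (-1 : ℤ)).2 : KK) * hb2) = -hb2 by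
      push_cast; ring]
    rw [map_neg]; ring
  have n3 : RatFunc.X - RatFunc.C (boxWeight b) + RatFunc.C (hbar 2) = fK (dg b + (1, 1)) := by
    rw [h3, fK_add]
    rw [show ((((1 : ℤ), (1 : ℤ)).1 : KK) * hb1 + (((1 : ℤ), (1 : ℤ)).2 : KK) * hb2)
        = -(-hb1 - hb2) by push_cast; ring]
    rw [map_neg]; simp only [hb3]; ring
  have d1 : RatFunc.X - RatFunc.C (boxWeight b) - RatFunc.C (hbar 0) = fK (dg b + (1, 0)) := by
    rw [h1, fK_add]
    rw [show ((((1 : ℤ), (0 : ℤ)).1 : KK) * hb1 + (((1 : ℤ), (0 : ℤ)).2 : KK) * hb2) = hb1 by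
      push_cast; ring]
  have d2 : RatFunc.X - RatFunc.C (boxWeight b) - RatFunc.C (hbar 1) = fK (dg b + (0, 1)) := by
    rw [h2, fK_add]
    rw [show ((((0 : ℤ), (1 : ℤ)).1 : KK) * hb1 + (((0 : ℤ), (1 : ℤ)).2 : KK) * hb2) = hb2 by
      push_cast; ring]
  have d3 : RatFunc.X - RatFunc.C (boxWeight b) - RatFunc.C (hbar 2) = fK (dg b + (-1, -1)) := by
    rw [h3, fK_add]
    rw [show ((((-1 : ℤ), (-1 : ℤ)).1 : KK) * hb1 + (((-1 : ℤ), (-1 : ℤ)).2 : KK) * hb2)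
        = (-hb1 - hb2) by push_cast; ring]
    simp only [hb3]
  rw [Fin.prod_univ_three, n1, n2, n3, d1, d2, d3]
  rw [mB, Phi_sub, Phi_sub, Phi_sub, Phi_add, Phi_add]
  simp only [Phi_single, zpow_one]
  field_simp

section Comb

/-- Indicator of a lattice point (in `ℤ³`) being a box of `lam`. -/
def ind (lam : Finset Box3) (v : ℤ × ℤ × ℤ) : ℕ :=
  if 0 ≤ v.1 ∧ 0 ≤ v.2.1 ∧ 0 ≤ v.2.2 ∧ (v.1.toNat, v.2.1.toNat, v.2.2.toNat) ∈ lam then 1 else 0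

variable (lam : Finset Box3)

lemma ind_le_one (v : ℤ × ℤ × ℤ) : ind lam v ≤ 1 := by
  unfold ind; split <;> omega

lemma ind_eq_one_iff {v : ℤ × ℤ × ℤ} :
    ind lam v = 1 ↔ (0 ≤ v.1 ∧ 0 ≤ v.2.1 ∧ 0 ≤ v.2.2 ∧
      (v.1.toNat, v.2.1.toNat, v.2.2.toNat) ∈ lam) := by
  unfold ind; split
  · next h => simpa using h
  · next h => simpa using h

lemma ind_zero₁ (x y z : ℤ) (h : x < 0) : ind lam (x, y, z) = 0 := by
  unfold ind; split
  · next hh => exact absurd hh.1 (by omega)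
  · rfl

lemma ind_zero₂ (x y z : ℤ) (h : y < 0) : ind lam (x, y, z) = 0 := by
  unfold ind; split
  · next hh => exact absurd (show (0:ℤ) ≤ y from hh.2.1) (by omega)
  · rfl

lemma ind_zero₃ (x y z : ℤ) (h : z < 0) : ind lam (x, y, z) = 0 := by
  unfold ind; split
  · next hh => exact absurd (show (0:ℤ) ≤ z from hh.2.2.1) (by omega)
  · rfl

/-- Bound on third coordinates of boxes. -/
def zmax (lam : Finset Box3) : ℤ := ((lam.sup fun b => b.2.2 : ℕ) : ℤ)

lemma zmax_nonneg : 0 ≤ zmax lam := Int.natCast_nonneg _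

lemma ind_le_zmax (x y z : ℤ) (h : ind lam (x, y, z) = 1) : z ≤ zmax lam := by
  rw [ind_eq_one_iff] at h
  obtain ⟨hx, hy, hz, hm⟩ := h
  have h2 : z.toNat ≤ lam.sup fun b => b.2.2 :=
    Finset.le_sup (f := fun b : Box3 => b.2.2) hm
  have hz' : (0:ℤ) ≤ z := hz
  simp only [zmax]
  omega

lemma ind_zero_big (x y z : ℤ) (h : zmax lam < z) : ind lam (x, y, z) = 0 := by
  have h1 := ind_le_one lam (x, y, z)
  by_contra hc
  have : ind lam (x, y, z) = 1 := by omega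
  have := ind_le_zmax lam x y z this
  omega

lemma ind_mono (hlam : IsDownwardClosed (↑lam : Set Box3)) (x1 y1 z1 x2 y2 z2 : ℤ)
    (h1 : 0 ≤ x2) (h2 : 0 ≤ y2) (h3 : 0 ≤ z2)
    (l1 : x2 ≤ x1) (l2 : y2 ≤ y1) (l3 : z2 ≤ z1) :
    ind lam (x1, y1, z1) ≤ ind lam (x2, y2, z2) := by
  by_cases hv : ind lam (x1, y1, z1) = 1
  · rw [ind_eq_one_iff] at hv
    obtain ⟨a1, a2, a3, hm⟩ := hv
    have hmem : (x2.toNat, y2.toNat, z2.toNat) ∈ (↑lam : Set Box3) :=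
      hlam _ (Finset.mem_coe.mpr hm) (x2.toNat, y2.toNat, z2.toNat)
        (show x2.toNat ≤ x1.toNat by omega) (show y2.toNat ≤ y1.toNat by omega)
        (show z2.toNat ≤ z1.toNat by omega)
    have hb : ind lam (x2, y2, z2) = 1 :=
      (ind_eq_one_iff lam).mpr ⟨h1, h2, h3, Finset.mem_coe.mp hmem⟩
    have hb2 := ind_le_one lam (x1, y1, z1)
    omega
  · have := ind_le_one lam (x1, y1, z1)
    omega

lemma mem_addBoxes_of (hlam : IsDownwardClosed (↑lam : Set Box3)) (x y z : ℤ)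
    (hx : 0 ≤ x) (hy : 0 ≤ y) (hz : 0 ≤ z) (h0 : ind lam (x, y, z) = 0)
    (p1 : 1 ≤ x → ind lam (x - 1, y, z) = 1) (p2 : 1 ≤ y → ind lam (x, y - 1, z) = 1)
    (p3 : 1 ≤ z → ind lam (x, y, z - 1) = 1) :
    (x.toNat, y.toNat, z.toNat) ∈ AddBoxes lam := by
  constructor
  · intro hmem
    have : ind lam (x, y, z) = 1 := (ind_eq_one_iff lam).mpr ⟨hx, hy, hz, hmem⟩
    omega
  · intro c hc c' hle1 hle2 hle3
    rw [Finset.coe_insert, Set.mem_insert_iff] at hc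
    rw [Finset.coe_insert, Set.mem_insert_iff]
    obtain ⟨u, v, w⟩ := c'
    rcases hc with rfl | hc
    · have hle1' : u ≤ x.toNat := hle1
      have hle2' : v ≤ y.toNat := hle2
      have hle3' : w ≤ z.toNat := hle3
      by_cases hcb : ((u, v, w) : Box3) = (x.toNat, y.toNat, z.toNat)
      · exact Or.inl hcb
      · have hne : u < x.toNat ∨ v < y.toNat ∨ w < z.toNat := by
          by_contra hcon
          push_neg at hcon
          apply hcb
          obtain ⟨e1, e2, e3⟩ : u = x.toNat ∧ v = y.toNat ∧ w = z.toNat := by omega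
          rw [e1, e2, e3]
        right
        rcases hne with h | h | h
        · have hx1 : 1 ≤ x := by omega
          have hm := (ind_eq_one_iff lam).mp (p1 hx1)
          exact hlam _ (Finset.mem_coe.mpr hm.2.2.2) (u, v, w)
            (show u ≤ (x - 1).toNat by omega) (show v ≤ y.toNat by omega)
            (show w ≤ z.toNat by omega)
        · have hy1 : 1 ≤ y := by omega
          have hm := (ind_eq_one_iff lam).mp (p2 hy1)
          exact hlam _ (Finset.mem_coe.mpr hm.2.2.2) (u, v, w)
            (show u ≤ x.toNat by omega) (show v ≤ (y - 1).toNat by omega)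
            (show w ≤ z.toNat by omega)
        · have hz1 : 1 ≤ z := by omega
          have hm := (ind_eq_one_iff lam).mp (p3 hz1)
          exact hlam _ (Finset.mem_coe.mpr hm.2.2.2) (u, v, w)
            (show u ≤ x.toNat by omega) (show v ≤ y.toNat by omega)
            (show w ≤ (z - 1).toNat by omega)
    · exact Or.inr (hlam _ hc _ hle1 hle2 hle3)

lemma mem_remBoxes_of (hlam : IsDownwardClosed (↑lam : Set Box3)) (x y z : ℤ)
    (h1 : ind lam (x, y, z) = 1)
    (s1 : ind lam (x + 1, y, z) = 0) (s2 : ind lam (x, y + 1, z) = 0)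
    (s3 : ind lam (x, y, z + 1) = 0) :
    (x.toNat, y.toNat, z.toNat) ∈ RemBoxes lam := by
  obtain ⟨hx, hy, hz, hmem⟩ := (ind_eq_one_iff lam).mp h1
  have hx' : (0:ℤ) ≤ x := hx
  have hy' : (0:ℤ) ≤ y := hy
  have hz' : (0:ℤ) ≤ z := hz
  constructor
  · exact hmem
  · intro c hc c' hle1 hle2 hle3
    rw [Finset.coe_erase, Set.mem_diff] at hc
    rw [Finset.coe_erase, Set.mem_diff]
    obtain ⟨hcl, hcb⟩ := hc
    refine ⟨hlam _ hcl _ hle1 hle2 hle3, ?_⟩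
    intro hsing
    rw [Set.mem_singleton_iff] at hsing
    obtain ⟨cu, cv, cw⟩ := c
    subst hsing
    have hle1' : x.toNat ≤ cu := hle1
    have hle2' : y.toNat ≤ cv := hle2
    have hle3' : z.toNat ≤ cw := hle3
    have hne : ¬(cu = x.toNat ∧ cv = y.toNat ∧ cw = z.toNat) := by
      rintro ⟨e1, e2, e3⟩
      apply hcb
      rw [Set.mem_singleton_iff, e1, e2, e3]
    have hs : x.toNat < cu ∨ y.toNat < cv ∨ z.toNat < cw := by omega
    rcases hs with h | h | h
    · have hin : ((x.toNat + 1, y.toNat, z.toNat) : Box3) ∈ (↑lam : Set Box3) :=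
        hlam _ hcl _ (show x.toNat + 1 ≤ cu by omega) (show y.toNat ≤ cv by omega)
          (show z.toNat ≤ cw by omega)
      have : ind lam (x + 1, y, z) = 1 := by
        refine (ind_eq_one_iff lam).mpr ⟨show (0:ℤ) ≤ x + 1 by omega, hy, hz, ?_⟩
        rw [show (x + 1).toNat = x.toNat + 1 by omega]
        exact Finset.mem_coe.mp hin
      omega
    · have hin : ((x.toNat, y.toNat + 1, z.toNat) : Box3) ∈ (↑lam : Set Box3) :=
        hlam _ hcl _ (show x.toNat ≤ cu by omega) (show y.toNat + 1 ≤ cv by omega)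
          (show z.toNat ≤ cw by omega)
      have : ind lam (x, y + 1, z) = 1 := by
        refine (ind_eq_one_iff lam).mpr ⟨hx, show (0:ℤ) ≤ y + 1 by omega, hz, ?_⟩
        rw [show (y + 1).toNat = y.toNat + 1 by omega]
        exact Finset.mem_coe.mp hin
      omega
    · have hin : ((x.toNat, y.toNat, z.toNat + 1) : Box3) ∈ (↑lam : Set Box3) :=
        hlam _ hcl _ (show x.toNat ≤ cu by omega) (show y.toNat ≤ cv by omega)
          (show z.toNat + 1 ≤ cw by omega)
      have : ind lam (x, y, z + 1) = 1 := by
        refine (ind_eq_one_iff lam).mpr ⟨hx, hy, show (0:ℤ) ≤ z + 1 by omega, ?_⟩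
        rw [show (z + 1).toNat = z.toNat + 1 by omega]
        exact Finset.mem_coe.mp hin
      omega

end Comb

section Comb2

variable (lam : Finset Box3)

lemma ML (hlam : IsDownwardClosed (↑lam : Set Box3)) (x y z : ℤ) :
    ind lam (x, y+1, z+1) + ind lam (x+1, y, z+1) + ind lam (x+1, y+1, z)
      ≤ ind lam (x+1, y, z) + ind lam (x, y+1, z) + ind lam (x, y, z+1) + 1 ∧
    (ind lam (x+1, y, z) + ind lam (x, y+1, z) + ind lam (x, y, z+1) + 1 ≤
        ind lam (x, y+1, z+1) + ind lam (x+1, y, z+1) + ind lam (x+1, y+1, z) →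
      ((x = -1 ∨ y = -1 ∨ z = -1) ∧ (-1 ≤ x ∧ -1 ≤ y ∧ -1 ≤ z) ∧ (0 ≤ x ∨ 0 ≤ y ∨ 0 ≤ z) ∧
        (ind lam (x+1, y+1, z+1) = 1 ∨
          ((x+1).toNat, (y+1).toNat, (z+1).toNat) ∈ AddBoxes lam))) := by
  have b1 := ind_le_one lam (x+1, y, z)
  have b2 := ind_le_one lam (x, y+1, z)
  have b3 := ind_le_one lam (x, y, z+1)
  have b4 := ind_le_one lam (x, y+1, z+1)
  have b5 := ind_le_one lam (x+1, y, z+1)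
  have b6 := ind_le_one lam (x+1, y+1, z)
  have b7 := ind_le_one lam (x+1, y+1, z+1)
  rcases le_or_gt 0 x with hx | hx
  · rcases le_or_gt 0 y with hy | hy
    · rcases le_or_gt 0 z with hz | hz
      · -- interior
        have i1 : ind lam (x, y+1, z+1) ≤ ind lam (x, y+1, z) :=
          ind_mono lam hlam x (y+1) (z+1) x (y+1) z hx (by omega) hz le_rfl le_rfl (by omega)
        have i2 : ind lam (x+1, y, z+1) ≤ ind lam (x, y, z+1) :=
          ind_mono lam hlam (x+1) y (z+1) x y (z+1) hx hy (by omega) (by omega) le_rfl le_rfl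
        have i3 : ind lam (x+1, y+1, z) ≤ ind lam (x+1, y, z) :=
          ind_mono lam hlam (x+1) (y+1) z (x+1) y z (by omega) hy hz le_rfl (by omega) le_rfl
        exact ⟨by omega, fun hdef => absurd hdef (by omega)⟩
      · -- x,y ≥ 0, z < 0
        rcases (by omega : z = -1 ∨ z < -1) with hz1 | hz2
        · have hw3 : ind lam (x+1, y+1, z) = 0 := ind_zero₃ lam _ _ _ (by omega)
          have i1 : ind lam (x, y+1, z+1) ≤ ind lam (x, y, z+1) :=
            ind_mono lam hlam x (y+1) (z+1) x y (z+1) hx hy (by omega) le_rfl (by omega) le_rfl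
          have i2 : ind lam (x+1, y, z+1) ≤ ind lam (x, y, z+1) :=
            ind_mono lam hlam (x+1) y (z+1) x y (z+1) hx hy (by omega) (by omega) le_rfl le_rfl
          refine ⟨by omega, fun hdef => ⟨by omega, by omega, by omega, ?_⟩⟩
          have hw1 : ind lam (x, y+1, z+1) = 1 := by omega
          have hw2 : ind lam (x+1, y, z+1) = 1 := by omega
          by_cases hP : ind lam (x+1, y+1, z+1) = 1
          · exact Or.inl hP
          · refine Or.inr (mem_addBoxes_of lam hlam (x+1) (y+1) (z+1) (by omega) (by omega)
              (by omega) (by omega) ?_ ?_ ?_)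
            · intro _; rw [show x+1-1 = x by ring]; exact hw1
            · intro _; rw [show y+1-1 = y by ring]; exact hw2
            · intro h; exact absurd h (by omega)
        · have hw1 : ind lam (x, y+1, z+1) = 0 := ind_zero₃ lam _ _ _ (by omega)
          have hw2 : ind lam (x+1, y, z+1) = 0 := ind_zero₃ lam _ _ _ (by omega)
          have hw3 : ind lam (x+1, y+1, z) = 0 := ind_zero₃ lam _ _ _ (by omega)
          exact ⟨by omega, fun hdef => absurd hdef (by omega)⟩
    · rcases le_or_gt 0 z with hz | hz
      · -- x ≥ 0, y < 0, z ≥ 0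
        rcases (by omega : y = -1 ∨ y < -1) with hy1 | hy2
        · have hw2 : ind lam (x+1, y, z+1) = 0 := ind_zero₂ lam _ _ _ (by omega)
          have i1 : ind lam (x, y+1, z+1) ≤ ind lam (x, y+1, z) :=
            ind_mono lam hlam x (y+1) (z+1) x (y+1) z hx (by omega) hz le_rfl le_rfl (by omega)
          have i3 : ind lam (x+1, y+1, z) ≤ ind lam (x, y+1, z) :=
            ind_mono lam hlam (x+1) (y+1) z x (y+1) z hx (by omega) hz (by omega) le_rfl le_rfl
          refine ⟨by omega, fun hdef => ⟨by omega, by omega, by omega, ?_⟩⟩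
          have hw1 : ind lam (x, y+1, z+1) = 1 := by omega
          have hw3 : ind lam (x+1, y+1, z) = 1 := by omega
          by_cases hP : ind lam (x+1, y+1, z+1) = 1
          · exact Or.inl hP
          · refine Or.inr (mem_addBoxes_of lam hlam (x+1) (y+1) (z+1) (by omega) (by omega)
              (by omega) (by omega) ?_ ?_ ?_)
            · intro _; rw [show x+1-1 = x by ring]; exact hw1
            · intro h; exact absurd h (by omega)
            · intro _; rw [show z+1-1 = z by ring]; exact hw3
        · have hw1 : ind lam (x, y+1, z+1) = 0 := ind_zero₂ lam _ _ _ (by omega)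
          have hw2 : ind lam (x+1, y, z+1) = 0 := ind_zero₂ lam _ _ _ (by omega)
          have hw3 : ind lam (x+1, y+1, z) = 0 := ind_zero₂ lam _ _ _ (by omega)
          exact ⟨by omega, fun hdef => absurd hdef (by omega)⟩
      · -- x ≥ 0, y < 0, z < 0 : pivot w1
        have hw2 : ind lam (x+1, y, z+1) = 0 := ind_zero₂ lam _ _ _ (by omega)
        have hw3 : ind lam (x+1, y+1, z) = 0 := ind_zero₃ lam _ _ _ (by omega)
        by_cases hw1v : ind lam (x, y+1, z+1) = 1
        · have hco := (ind_eq_one_iff lam).mp hw1v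
          have hyy : (0:ℤ) ≤ y+1 := hco.2.1
          have hzz : (0:ℤ) ≤ z+1 := hco.2.2.1
          refine ⟨by omega, fun hdef => ⟨by omega, by omega, by omega, ?_⟩⟩
          by_cases hP : ind lam (x+1, y+1, z+1) = 1
          · exact Or.inl hP
          · refine Or.inr (mem_addBoxes_of lam hlam (x+1) (y+1) (z+1) (by omega) (by omega)
              (by omega) (by omega) ?_ ?_ ?_)
            · intro _; rw [show x+1-1 = x by ring]; exact hw1v
            · intro h; exact absurd h (by omega)
            · intro h; exact absurd h (by omega)
        · have hw1 : ind lam (x, y+1, z+1) = 0 := by omega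
          exact ⟨by omega, fun hdef => absurd hdef (by omega)⟩
  · rcases le_or_gt 0 y with hy | hy
    · rcases le_or_gt 0 z with hz | hz
      · -- x < 0, y ≥ 0, z ≥ 0
        rcases (by omega : x = -1 ∨ x < -1) with hx1 | hx2
        · have hw1 : ind lam (x, y+1, z+1) = 0 := ind_zero₁ lam _ _ _ (by omega)
          have i2 : ind lam (x+1, y, z+1) ≤ ind lam (x+1, y, z) :=
            ind_mono lam hlam (x+1) y (z+1) (x+1) y z (by omega) hy hz le_rfl le_rfl (by omega)
          have i3 : ind lam (x+1, y+1, z) ≤ ind lam (x+1, y, z) :=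
            ind_mono lam hlam (x+1) (y+1) z (x+1) y z (by omega) hy hz le_rfl (by omega) le_rfl
          refine ⟨by omega, fun hdef => ⟨by omega, by omega, by omega, ?_⟩⟩
          have hw2 : ind lam (x+1, y, z+1) = 1 := by omega
          have hw3 : ind lam (x+1, y+1, z) = 1 := by omega
          by_cases hP : ind lam (x+1, y+1, z+1) = 1
          · exact Or.inl hP
          · refine Or.inr (mem_addBoxes_of lam hlam (x+1) (y+1) (z+1) (by omega) (by omega)
              (by omega) (by omega) ?_ ?_ ?_)
            · intro h; exact absurd h (by omega)
            · intro _; rw [show y+1-1 = y by ring]; exact hw2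
            · intro _; rw [show z+1-1 = z by ring]; exact hw3
        · have hw1 : ind lam (x, y+1, z+1) = 0 := ind_zero₁ lam _ _ _ (by omega)
          have hw2 : ind lam (x+1, y, z+1) = 0 := ind_zero₁ lam _ _ _ (by omega)
          have hw3 : ind lam (x+1, y+1, z) = 0 := ind_zero₁ lam _ _ _ (by omega)
          exact ⟨by omega, fun hdef => absurd hdef (by omega)⟩
      · -- x < 0, y ≥ 0, z < 0 : pivot w2
        have hw1 : ind lam (x, y+1, z+1) = 0 := ind_zero₁ lam _ _ _ (by omega)
        have hw3 : ind lam (x+1, y+1, z) = 0 := ind_zero₃ lam _ _ _ (by omega)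
        by_cases hw2v : ind lam (x+1, y, z+1) = 1
        · have hco := (ind_eq_one_iff lam).mp hw2v
          have hxx : (0:ℤ) ≤ x+1 := hco.1
          have hzz : (0:ℤ) ≤ z+1 := hco.2.2.1
          refine ⟨by omega, fun hdef => ⟨by omega, by omega, by omega, ?_⟩⟩
          by_cases hP : ind lam (x+1, y+1, z+1) = 1
          · exact Or.inl hP
          · refine Or.inr (mem_addBoxes_of lam hlam (x+1) (y+1) (z+1) (by omega) (by omega)
              (by omega) (by omega) ?_ ?_ ?_)
            · intro h; exact absurd h (by omega)
            · intro _; rw [show y+1-1 = y by ring]; exact hw2v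
            · intro h; exact absurd h (by omega)
        · have hw2 : ind lam (x+1, y, z+1) = 0 := by omega
          exact ⟨by omega, fun hdef => absurd hdef (by omega)⟩
    · rcases le_or_gt 0 z with hz | hz
      · -- x < 0, y < 0, z ≥ 0 : pivot w3
        have hw1 : ind lam (x, y+1, z+1) = 0 := ind_zero₁ lam _ _ _ (by omega)
        have hw2 : ind lam (x+1, y, z+1) = 0 := ind_zero₂ lam _ _ _ (by omega)
        by_cases hw3v : ind lam (x+1, y+1, z) = 1
        · have hco := (ind_eq_one_iff lam).mp hw3v
          have hxx : (0:ℤ) ≤ x+1 := hco.1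
          have hyy : (0:ℤ) ≤ y+1 := hco.2.1
          refine ⟨by omega, fun hdef => ⟨by omega, by omega, by omega, ?_⟩⟩
          by_cases hP : ind lam (x+1, y+1, z+1) = 1
          · exact Or.inl hP
          · refine Or.inr (mem_addBoxes_of lam hlam (x+1) (y+1) (z+1) (by omega) (by omega)
              (by omega) (by omega) ?_ ?_ ?_)
            · intro h; exact absurd h (by omega)
            · intro h; exact absurd h (by omega)
            · intro _; rw [show z+1-1 = z by ring]; exact hw3v
        · have hw3 : ind lam (x+1, y+1, z) = 0 := by omega
          exact ⟨by omega, fun hdef => absurd hdef (by omega)⟩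
      · -- x < 0, y < 0, z < 0
        have hw1 : ind lam (x, y+1, z+1) = 0 := ind_zero₁ lam _ _ _ (by omega)
        have hw2 : ind lam (x+1, y, z+1) = 0 := ind_zero₂ lam _ _ _ (by omega)
        have hw3 : ind lam (x+1, y+1, z) = 0 := ind_zero₃ lam _ _ _ (by omega)
        exact ⟨by omega, fun hdef => absurd hdef (by omega)⟩

lemma addrem_finite : (AddBoxes lam ∪ RemBoxes lam).Finite := by
  apply Set.Finite.union
  · have hsub : AddBoxes lam ⊆ ↑(insert ((0, 0, 0) : Box3)
        (((lam.image fun b : Box3 => (b.1 + 1, b.2.1, b.2.2)) ∪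
          (lam.image fun b : Box3 => (b.1, b.2.1 + 1, b.2.2))) ∪
          (lam.image fun b : Box3 => (b.1, b.2.1, b.2.2 + 1)))) := by
      rintro ⟨u, v, w⟩ ⟨hnot, hcl⟩
      rw [Finset.coe_insert, Set.mem_insert_iff]
      by_cases h0 : ((u, v, w) : Box3) = ((0, 0, 0) : Box3)
      · exact Or.inl h0
      · right
        have hne : 1 ≤ u ∨ 1 ≤ v ∨ 1 ≤ w := by
          by_contra hcon
          push_neg at hcon
          apply h0
          obtain ⟨e1, e2, e3⟩ : u = 0 ∧ v = 0 ∧ w = 0 := by omega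
          rw [e1, e2, e3]
        have hself : ((u, v, w) : Box3) ∈ (↑(insert ((u, v, w) : Box3) lam) : Set Box3) := by
          rw [Finset.coe_insert]; exact Set.mem_insert _ _
        simp only [Finset.coe_union, Set.mem_union, Finset.mem_coe, Finset.mem_image]
        rcases hne with h | h | h
        · have hin := hcl _ hself (u - 1, v, w) (show u - 1 ≤ u by omega)
            (show v ≤ v from le_rfl) (show w ≤ w from le_rfl)
          rw [Finset.coe_insert, Set.mem_insert_iff] at hin
          rcases hin with heq | hin
          · exfalso
            have : u - 1 = u := congrArg Prod.fst heq
            omega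
          · refine Or.inl (Or.inl ⟨(u - 1, v, w), Finset.mem_coe.mp hin, ?_⟩)
            have : u - 1 + 1 = u := by omega
            rw [this]
        · have hin := hcl _ hself (u, v - 1, w) (show u ≤ u from le_rfl)
            (show v - 1 ≤ v by omega) (show w ≤ w from le_rfl)
          rw [Finset.coe_insert, Set.mem_insert_iff] at hin
          rcases hin with heq | hin
          · exfalso
            have : v - 1 = v := congrArg (fun b : Box3 => b.2.1) heq
            omega
          · refine Or.inl (Or.inr ⟨(u, v - 1, w), Finset.mem_coe.mp hin, ?_⟩)
            have : v - 1 + 1 = v := by omega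
            rw [this]
        · have hin := hcl _ hself (u, v, w - 1) (show u ≤ u from le_rfl)
            (show v ≤ v from le_rfl) (show w - 1 ≤ w by omega)
          rw [Finset.coe_insert, Set.mem_insert_iff] at hin
          rcases hin with heq | hin
          · exfalso
            have : w - 1 = w := congrArg (fun b : Box3 => b.2.2) heq
            omega
          · refine Or.inr ⟨(u, v, w - 1), Finset.mem_coe.mp hin, ?_⟩
            have : w - 1 + 1 = w := by omega
            rw [this]
    exact Set.Finite.subset (Finset.finite_toSet _) hsub
  · exact Set.Finite.subset (Finset.finite_toSet lam) (fun b hb => hb.1)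

end Comb2

section Comb3

variable (lam : Finset Box3)

/-- Number of boxes of `lam` on diagonal `p`, as an integer. -/
def cnt (lam : Finset Box3) (p : ℤ × ℤ) : ℤ := ∑ b ∈ lam, if dg b = p then (1 : ℤ) else 0

/-- Point of the diagonal line of `q` at height `k`. -/
def pt (q : ℤ × ℤ) (k : ℤ) : ℤ × ℤ × ℤ := (q.1 + k, q.2 + k, k)

lemma cnt_window (p : ℤ × ℤ) (N : ℤ) (hN : zmax lam ≤ N) (hN0 : 0 ≤ N) :
    cnt lam p = ∑ k ∈ Finset.Icc (-N) N, (ind lam (pt p k) : ℤ) := by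
  classical
  have L : cnt lam p = ((lam.filter fun b => dg b = p).card : ℤ) := by
    rw [cnt, Finset.sum_boole]
  have R : (∑ k ∈ Finset.Icc (-N) N, (ind lam (pt p k) : ℤ))
      = (((Finset.Icc (-N) N).filter fun k => ind lam (pt p k) = 1).card : ℤ) := by
    rw [← Finset.sum_boole]
    refine Finset.sum_congr rfl fun k _ => ?_
    have := ind_le_one lam (pt p k)
    split
    · next h => rw [h]; norm_num
    · next h => omega
  rw [L, R]
  congr 1
  apply Finset.card_bij' (i := fun b _ => (b.2.2 : ℤ))
    (j := fun k _ => ((pt p k).1.toNat, (pt p k).2.1.toNat, (pt p k).2.2.toNat))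
  · intro b hb
    rw [Finset.mem_filter] at hb
    obtain ⟨hbl, hbd⟩ := hb
    rw [Finset.mem_filter]
    have hzb : b.2.2 ≤ lam.sup fun b : Box3 => b.2.2 :=
      Finset.le_sup (f := fun b : Box3 => b.2.2) hbl
    have hzb' : (b.2.2 : ℤ) ≤ zmax lam := by simp only [zmax]; omega
    constructor
    · rw [Finset.mem_Icc]; omega
    · have hd1 : (dg b).1 = p.1 := by rw [hbd]
      have hd2 : (dg b).2 = p.2 := by rw [hbd]
      simp only [dg] at hd1 hd2
      refine (ind_eq_one_iff lam).mpr ⟨?_, ?_, ?_, ?_⟩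
      · show (0:ℤ) ≤ p.1 + (b.2.2 : ℤ); omega
      · show (0:ℤ) ≤ p.2 + (b.2.2 : ℤ); omega
      · show (0:ℤ) ≤ (b.2.2 : ℤ); omega
      · have e1 : (p.1 + (b.2.2 : ℤ)).toNat = b.1 := by omega
        have e2 : (p.2 + (b.2.2 : ℤ)).toNat = b.2.1 := by omega
        have e3 : ((b.2.2 : ℤ)).toNat = b.2.2 := by omega
        show ((p.1 + (b.2.2:ℤ)).toNat, (p.2 + (b.2.2:ℤ)).toNat, ((b.2.2:ℤ)).toNat) ∈ lam
        rw [e1, e2, e3]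
        exact hbl
  · intro k hk
    rw [Finset.mem_filter] at hk
    obtain ⟨hkI, hkind⟩ := hk
    rw [Finset.mem_filter]
    obtain ⟨h1, h2, h3, hm⟩ := (ind_eq_one_iff lam).mp hkind
    refine ⟨hm, ?_⟩
    have c1 : (0:ℤ) ≤ p.1 + k := h1
    have c2 : (0:ℤ) ≤ p.2 + k := h2
    have c3 : (0:ℤ) ≤ k := h3
    simp only [dg, pt]
    rw [Prod.ext_iff]
    constructor <;> simp <;> omega
  · intro b hb
    rw [Finset.mem_filter] at hb
    obtain ⟨hbl, hbd⟩ := hb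
    have hd1 : (dg b).1 = p.1 := by rw [hbd]
    have hd2 : (dg b).2 = p.2 := by rw [hbd]
    simp only [dg] at hd1 hd2
    show ((p.1 + (b.2.2:ℤ)).toNat, (p.2 + (b.2.2:ℤ)).toNat, ((b.2.2:ℤ)).toNat) = b
    obtain ⟨b1, b2, b3⟩ := b
    simp only [Prod.mk.injEq]
    simp only at hd1 hd2
    refine ⟨by omega, by omega, by omega⟩
  · intro k hk
    rw [Finset.mem_filter] at hk
    obtain ⟨hkI, hkind⟩ := hk
    obtain ⟨h1, h2, h3, _⟩ := (ind_eq_one_iff lam).mp hkind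
    have c3 : (0:ℤ) ≤ k := h3
    show (((pt p k).2.2.toNat : ℕ) : ℤ) = k
    simp only [pt]
    omega

lemma sum_shift (N : ℤ) (f : ℤ → ℕ) (h1 : f (-N) = 0) (h2 : f (N + 1) = 0) :
    ∑ k ∈ Finset.Icc (-N) N, (f (k + 1) : ℤ) = ∑ k ∈ Finset.Icc (-N) N, (f k : ℤ) := by
  have e1 : ∑ k ∈ Finset.Icc (-N) N, (f (k + 1) : ℤ)
      = ∑ k ∈ Finset.Icc (-N + 1) (N + 1), (f k : ℤ) := by
    rw [← Finset.map_add_right_Icc _ _ 1, Finset.sum_map]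
    rfl
  rw [e1]
  have sub1 : Finset.Icc (-N + 1) (N + 1) ⊆ Finset.Icc (-N) (N + 1) :=
    Finset.Icc_subset_Icc (by omega) le_rfl
  have sub2 : Finset.Icc (-N) N ⊆ Finset.Icc (-N) (N + 1) :=
    Finset.Icc_subset_Icc le_rfl (by omega)
  rw [Finset.sum_subset sub1 ?z1, Finset.sum_subset sub2 ?z2]
  case z1 =>
    intro x hx hnx
    rw [Finset.mem_Icc] at hx
    have : x = -N := by
      simp only [Finset.mem_Icc] at hnx
      omega
    rw [this, h1]
    rfl
  case z2 =>
    intro x hx hnx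
    rw [Finset.mem_Icc] at hx
    have : x = N + 1 := by
      simp only [Finset.mem_Icc] at hnx
      omega
    rw [this, h2]
    rfl

lemma sum_shift' (N : ℤ) (f : ℤ → ℕ) (h1 : f (-N - 1) = 0) (h2 : f N = 0) :
    ∑ k ∈ Finset.Icc (-N) N, (f (k - 1) : ℤ) = ∑ k ∈ Finset.Icc (-N) N, (f k : ℤ) := by
  have := sum_shift N (fun k => f (k - 1)) (by simpa using h1)
    (by simp only [add_sub_cancel_right]; exact h2)
  simp only [add_sub_cancel_right] at this
  exact this.symm

/-- The local net outflow at height `k` along the diagonal line of `q`. -/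
def G (lam : Finset Box3) (q : ℤ × ℤ) (k : ℤ) : ℤ :=
  ((ind lam (q.1 + k + 1, q.2 + k, k) : ℤ) + (ind lam (q.1 + k, q.2 + k + 1, k) : ℤ)
      + (ind lam (q.1 + k, q.2 + k, k + 1) : ℤ))
    - ((ind lam (q.1 + k, q.2 + k + 1, k + 1) : ℤ) + (ind lam (q.1 + k + 1, q.2 + k, k + 1) : ℤ)
      + (ind lam (q.1 + k + 1, q.2 + k + 1, k) : ℤ))

lemma window_sum (q : ℤ × ℤ) (N : ℤ) (hN : zmax lam + 1 ≤ N) :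
    cnt lam (q + (1, 0)) + cnt lam (q + (0, 1)) + cnt lam (q + (-1, -1))
      - cnt lam (q + (-1, 0)) - cnt lam (q + (0, -1)) - cnt lam (q + (1, 1))
    = ∑ k ∈ Finset.Icc (-N) N, G lam q k := by
  have hzm := zmax_nonneg lam
  have hN' : zmax lam ≤ N := by omega
  have hN0 : (0:ℤ) ≤ N := by omega
  have c1 : cnt lam (q + (1, 0))
      = ∑ k ∈ Finset.Icc (-N) N, (ind lam (q.1 + k + 1, q.2 + k, k) : ℤ) := by
    rw [cnt_window lam _ N hN' hN0]
    have e : ∀ k : ℤ, pt (q + (1, 0)) k = (q.1 + k + 1, q.2 + k, k) := by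
      intro k; unfold pt; simp [Prod.ext_iff]; try omega
    exact Finset.sum_congr rfl fun k _ => by rw [e k]
  have c2 : cnt lam (q + (0, 1))
      = ∑ k ∈ Finset.Icc (-N) N, (ind lam (q.1 + k, q.2 + k + 1, k) : ℤ) := by
    rw [cnt_window lam _ N hN' hN0]
    have e : ∀ k : ℤ, pt (q + (0, 1)) k = (q.1 + k, q.2 + k + 1, k) := by
      intro k; unfold pt; simp [Prod.ext_iff]; try omega
    exact Finset.sum_congr rfl fun k _ => by rw [e k]
  have c3 : cnt lam (q + (-1, -1))
      = ∑ k ∈ Finset.Icc (-N) N, (ind lam (q.1 + k, q.2 + k, k + 1) : ℤ) := by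
    rw [cnt_window lam _ N hN' hN0]
    have e : ∀ k : ℤ, pt (q + (-1, -1)) k
        = (q.1 + (k - 1), q.2 + (k - 1), (k - 1) + 1) := by
      intro k; unfold pt; simp [Prod.ext_iff]; try omega
    rw [Finset.sum_congr rfl fun k _ => by rw [e k]]
    have hb1 : (fun j => ind lam (q.1 + j, q.2 + j, j + 1)) (-N - 1) = 0 := by
      show ind lam (q.1 + (-N - 1), q.2 + (-N - 1), -N - 1 + 1) = 0
      exact ind_zero₃ lam _ _ _ (by omega)
    have hb2 : (fun j => ind lam (q.1 + j, q.2 + j, j + 1)) N = 0 := by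
      show ind lam (q.1 + N, q.2 + N, N + 1) = 0
      exact ind_zero_big lam _ _ _ (by omega)
    exact sum_shift' N (fun j => ind lam (q.1 + j, q.2 + j, j + 1)) hb1 hb2
  have c4 : cnt lam (q + (-1, 0))
      = ∑ k ∈ Finset.Icc (-N) N, (ind lam (q.1 + k, q.2 + k + 1, k + 1) : ℤ) := by
    rw [cnt_window lam _ N hN' hN0]
    have e : ∀ k : ℤ, pt (q + (-1, 0)) k
        = (q.1 + (k - 1), q.2 + (k - 1) + 1, (k - 1) + 1) := by
      intro k; unfold pt; simp [Prod.ext_iff]; try omega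
    rw [Finset.sum_congr rfl fun k _ => by rw [e k]]
    have hb1 : (fun j => ind lam (q.1 + j, q.2 + j + 1, j + 1)) (-N - 1) = 0 := by
      show ind lam (q.1 + (-N - 1), q.2 + (-N - 1) + 1, -N - 1 + 1) = 0
      exact ind_zero₃ lam _ _ _ (by omega)
    have hb2 : (fun j => ind lam (q.1 + j, q.2 + j + 1, j + 1)) N = 0 := by
      show ind lam (q.1 + N, q.2 + N + 1, N + 1) = 0
      exact ind_zero_big lam _ _ _ (by omega)
    exact sum_shift' N (fun j => ind lam (q.1 + j, q.2 + j + 1, j + 1)) hb1 hb2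
  have c5 : cnt lam (q + (0, -1))
      = ∑ k ∈ Finset.Icc (-N) N, (ind lam (q.1 + k + 1, q.2 + k, k + 1) : ℤ) := by
    rw [cnt_window lam _ N hN' hN0]
    have e : ∀ k : ℤ, pt (q + (0, -1)) k
        = (q.1 + (k - 1) + 1, q.2 + (k - 1), (k - 1) + 1) := by
      intro k; unfold pt; simp [Prod.ext_iff]; try omega
    rw [Finset.sum_congr rfl fun k _ => by rw [e k]]
    have hb1 : (fun j => ind lam (q.1 + j + 1, q.2 + j, j + 1)) (-N - 1) = 0 := by
      show ind lam (q.1 + (-N - 1) + 1, q.2 + (-N - 1), -N - 1 + 1) = 0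
      exact ind_zero₃ lam _ _ _ (by omega)
    have hb2 : (fun j => ind lam (q.1 + j + 1, q.2 + j, j + 1)) N = 0 := by
      show ind lam (q.1 + N + 1, q.2 + N, N + 1) = 0
      exact ind_zero_big lam _ _ _ (by omega)
    exact sum_shift' N (fun j => ind lam (q.1 + j + 1, q.2 + j, j + 1)) hb1 hb2
  have c6 : cnt lam (q + (1, 1))
      = ∑ k ∈ Finset.Icc (-N) N, (ind lam (q.1 + k + 1, q.2 + k + 1, k) : ℤ) := by
    rw [cnt_window lam _ N hN' hN0]
    have e : ∀ k : ℤ, pt (q + (1, 1)) k = (q.1 + k + 1, q.2 + k + 1, k) := by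
      intro k; unfold pt; simp [Prod.ext_iff]; try omega
    exact Finset.sum_congr rfl fun k _ => by rw [e k]
  rw [c1, c2, c3, c4, c5, c6]
  simp only [G, Finset.sum_sub_distrib, Finset.sum_add_distrib]
  ring

end Comb3

section Comb4

variable (lam : Finset Box3)

lemma pt_eq (q : ℤ × ℤ) (k : ℤ) : pt q k = (q.1 + k, q.2 + k, k) := rfl

lemma top_lemma (hlam : IsDownwardClosed (↑lam : Set Box3)) (q : ℤ × ℤ) (N : ℤ)
    (hN : zmax lam + 1 ≤ N)
    (hex : ∃ k ∈ Finset.Icc (-N) N, ind lam (pt q k) = 1) :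
    (∃ b : Box3, b ∈ AddBoxes lam ∪ RemBoxes lam ∧ dg b = q) ∨
    (∃ k ∈ Finset.Icc (-N) N, (0 ≤ q.1 + k ∧ 0 ≤ q.2 + k ∧ 0 ≤ k) ∧ 1 ≤ G lam q k) := by
  classical
  obtain ⟨k1, hk1, hind1⟩ := hex
  have hFne : ((Finset.Icc (-N) N).filter (fun k => ind lam (pt q k) = 1)).Nonempty :=
    ⟨k1, Finset.mem_filter.mpr ⟨hk1, hind1⟩⟩
  set T := ((Finset.Icc (-N) N).filter (fun k => ind lam (pt q k) = 1)).max' hFne with hT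
  have hTmem : T ∈ (Finset.Icc (-N) N).filter (fun k => ind lam (pt q k) = 1) :=
    Finset.max'_mem _ hFne
  rw [Finset.mem_filter] at hTmem
  obtain ⟨hTIcc, hTind⟩ := hTmem
  rw [Finset.mem_Icc] at hTIcc
  have hTind' : ind lam (q.1 + T, q.2 + T, T) = 1 := by rw [← pt_eq]; exact hTind
  obtain ⟨hco1, hco2, hco3, _⟩ := (ind_eq_one_iff lam).mp hTind'
  have hco1' : (0:ℤ) ≤ q.1 + T := hco1
  have hco2' : (0:ℤ) ≤ q.2 + T := hco2
  have hco3' : (0:ℤ) ≤ T := hco3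
  have hzle : T ≤ zmax lam := ind_le_zmax lam _ _ _ hTind'
  have htop : ind lam (q.1 + T + 1, q.2 + T + 1, T + 1) = 0 := by
    by_contra hcon
    have hb := ind_le_one lam (q.1 + T + 1, q.2 + T + 1, T + 1)
    have h1 : ind lam (q.1 + T + 1, q.2 + T + 1, T + 1) = 1 := by omega
    have hz1 : T + 1 ≤ zmax lam := ind_le_zmax lam _ _ _ h1
    have hmemF : T + 1 ∈ (Finset.Icc (-N) N).filter (fun k => ind lam (pt q k) = 1) := by
      rw [Finset.mem_filter]
      refine ⟨Finset.mem_Icc.mpr ⟨by omega, by omega⟩, ?_⟩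
      rw [pt_eq]
      rw [show q.1 + (T + 1) = q.1 + T + 1 by ring, show q.2 + (T + 1) = q.2 + T + 1 by ring]
      exact h1
    have hle := Finset.le_max' _ (T + 1) hmemF
    rw [← hT] at hle
    omega
  by_cases hADD : ind lam (q.1 + T, q.2 + T + 1, T + 1) = 1 ∧
      ind lam (q.1 + T + 1, q.2 + T, T + 1) = 1 ∧ ind lam (q.1 + T + 1, q.2 + T + 1, T) = 1
  · left
    refine ⟨((q.1 + T + 1).toNat, (q.2 + T + 1).toNat, (T + 1).toNat),
      Set.mem_union_left _ ?_, ?_⟩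
    · refine mem_addBoxes_of lam hlam (q.1 + T + 1) (q.2 + T + 1) (T + 1)
        (by omega) (by omega) (by omega) htop ?_ ?_ ?_
      · intro _
        rw [show q.1 + T + 1 - 1 = q.1 + T by ring]
        exact hADD.1
      · intro _
        rw [show q.2 + T + 1 - 1 = q.2 + T by ring]
        exact hADD.2.1
      · intro _
        rw [show T + 1 - 1 = T by ring]
        exact hADD.2.2
    · simp only [dg]
      rw [Prod.ext_iff]
      constructor <;> simp <;> omega
  · by_cases hREM : ind lam (q.1 + T + 1, q.2 + T, T) = 0 ∧
        ind lam (q.1 + T, q.2 + T + 1, T) = 0 ∧ ind lam (q.1 + T, q.2 + T, T + 1) = 0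
    · left
      refine ⟨((q.1 + T).toNat, (q.2 + T).toNat, T.toNat), Set.mem_union_right _ ?_, ?_⟩
      · exact mem_remBoxes_of lam hlam _ _ _ hTind' hREM.1 hREM.2.1 hREM.2.2
      · simp only [dg]
        rw [Prod.ext_iff]
        constructor <;> simp <;> omega
    · right
      refine ⟨T, Finset.mem_Icc.mpr ⟨by omega, by omega⟩, ⟨hco1', hco2', hco3'⟩, ?_⟩
      have i1 : ind lam (q.1 + T, q.2 + T + 1, T + 1) ≤ ind lam (q.1 + T, q.2 + T + 1, T) :=
        ind_mono lam hlam _ _ _ _ _ _ hco1' (by omega) hco3' le_rfl le_rfl (by omega)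
      have i2 : ind lam (q.1 + T, q.2 + T + 1, T + 1) ≤ ind lam (q.1 + T, q.2 + T, T + 1) :=
        ind_mono lam hlam _ _ _ _ _ _ hco1' hco2' (by omega) le_rfl (by omega) le_rfl
      have i3 : ind lam (q.1 + T + 1, q.2 + T, T + 1) ≤ ind lam (q.1 + T + 1, q.2 + T, T) :=
        ind_mono lam hlam _ _ _ _ _ _ (by omega) hco2' hco3' le_rfl le_rfl (by omega)
      have i4 : ind lam (q.1 + T + 1, q.2 + T, T + 1) ≤ ind lam (q.1 + T, q.2 + T, T + 1) :=
        ind_mono lam hlam _ _ _ _ _ _ hco1' hco2' (by omega) (by omega) le_rfl le_rfl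
      have i5 : ind lam (q.1 + T + 1, q.2 + T + 1, T) ≤ ind lam (q.1 + T + 1, q.2 + T, T) :=
        ind_mono lam hlam _ _ _ _ _ _ (by omega) hco2' hco3' le_rfl (by omega) le_rfl
      have i6 : ind lam (q.1 + T + 1, q.2 + T + 1, T) ≤ ind lam (q.1 + T, q.2 + T + 1, T) :=
        ind_mono lam hlam _ _ _ _ _ _ hco1' (by omega) hco3' (by omega) le_rfl le_rfl
      have b1 := ind_le_one lam (q.1 + T + 1, q.2 + T, T)
      have b2 := ind_le_one lam (q.1 + T, q.2 + T + 1, T)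
      have b3 := ind_le_one lam (q.1 + T, q.2 + T, T + 1)
      have b4 := ind_le_one lam (q.1 + T, q.2 + T + 1, T + 1)
      have b5 := ind_le_one lam (q.1 + T + 1, q.2 + T, T + 1)
      have b6 := ind_le_one lam (q.1 + T + 1, q.2 + T + 1, T)
      unfold G
      omega

lemma key_ineq (hlam : IsDownwardClosed (↑lam : Set Box3)) (S : Finset Box3)
    (hS : ∀ b : Box3, b ∈ AddBoxes lam ∪ RemBoxes lam → b ∈ S) (q : ℤ × ℤ) :
    (if ((0, 0) : ℤ × ℤ) = q then (1 : ℤ) else 0)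
      ≤ cnt lam (q + (1, 0)) + cnt lam (q + (0, 1)) + cnt lam (q + (-1, -1))
        - cnt lam (q + (-1, 0)) - cnt lam (q + (0, -1)) - cnt lam (q + (1, 1))
        + ∑ b ∈ S, (if dg b = q then (1 : ℤ) else 0) := by
  classical
  have hzm := zmax_nonneg lam
  set N : ℤ := zmax lam + 2 + (q.1.natAbs : ℤ) + (q.2.natAbs : ℤ) with hNdef
  have hN : zmax lam + 1 ≤ N := by omega
  rw [window_sum lam q N hN]
  have hs0 : (0:ℤ) ≤ ∑ b ∈ S, (if dg b = q then (1 : ℤ) else 0) :=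
    Finset.sum_nonneg fun b _ => by split <;> norm_num
  have hsge : ∀ b : Box3, b ∈ AddBoxes lam ∪ RemBoxes lam → dg b = q →
      (1:ℤ) ≤ ∑ b ∈ S, (if dg b = q then (1 : ℤ) else 0) := by
    intro b hb hdg
    have hmem : b ∈ S := hS b hb
    calc (1:ℤ) = (if dg b = q then (1:ℤ) else 0) := by rw [if_pos hdg]
    _ ≤ ∑ b ∈ S, (if dg b = q then (1 : ℤ) else 0) :=
        Finset.single_le_sum (f := fun b => if dg b = q then (1:ℤ) else 0)
          (fun i _ => by split <;> norm_num) hmem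
  have hGlb : ∀ k : ℤ, -1 ≤ G lam q k := by
    intro k
    have := (ML lam hlam (q.1 + k) (q.2 + k) k).1
    unfold G
    omega
  have hdefic : ∀ k : ℤ, G lam q k < 0 →
      (((q.1 + k = -1 ∨ q.2 + k = -1 ∨ k = -1) ∧
        (-1 ≤ q.1 + k ∧ -1 ≤ q.2 + k ∧ -1 ≤ k) ∧ (0 ≤ q.1 + k ∨ 0 ≤ q.2 + k ∨ 0 ≤ k)) ∧
       (ind lam (q.1 + k + 1, q.2 + k + 1, k + 1) = 1 ∨
        ((q.1 + k + 1).toNat, (q.2 + k + 1).toNat, (k + 1).toNat) ∈ AddBoxes lam)) := by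
    intro k hneg
    have hm := (ML lam hlam (q.1 + k) (q.2 + k) k).2 (by unfold G at hneg; omega)
    exact ⟨⟨hm.1, hm.2.1, hm.2.2.1⟩, hm.2.2.2⟩
  by_cases hq : ((0, 0) : ℤ × ℤ) = q
  · subst hq
    rw [if_pos rfl]
    have hGnn : ∀ k ∈ Finset.Icc (-N) N, 0 ≤ G lam ((0,0) : ℤ × ℤ) k := by
      intro k _
      by_contra hneg
      obtain ⟨⟨hp1, hp2, hp3⟩, _⟩ := hdefic k (by omega)
      simp only at hp1 hp2 hp3
      omega
    by_cases hex : ∃ k ∈ Finset.Icc (-N) N, ind lam (pt ((0,0) : ℤ × ℤ) k) = 1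
    · rcases top_lemma lam hlam _ N hN hex with ⟨b, hb, hdgb⟩ |
        ⟨k0, hk0, _, hG1⟩
      · have h1 := hsge b hb hdgb
        have h2 : (0:ℤ) ≤ ∑ k ∈ Finset.Icc (-N) N, G lam ((0,0) : ℤ × ℤ) k :=
          Finset.sum_nonneg hGnn
        omega
      · have h2 : G lam ((0,0) : ℤ × ℤ) k0 ≤ ∑ k ∈ Finset.Icc (-N) N, G lam ((0,0):ℤ×ℤ) k := by
          have := Finset.sum_le_sum_of_subset_of_nonneg
            (Finset.singleton_subset_iff.mpr hk0) (fun i hi _ => hGnn i hi)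
          simpa using this
        omega
    · push_neg at hex
      have h00 : ((0, 0, 0) : Box3) ∉ lam := by
        intro hmem
        have h1 : ind lam ((0:ℤ), (0:ℤ), (0:ℤ)) = 1 :=
          (ind_eq_one_iff lam).mpr ⟨le_rfl, le_rfl, le_rfl, by simpa using hmem⟩
        have h2 := hex 0 (Finset.mem_Icc.mpr ⟨by omega, by omega⟩)
        apply h2
        rw [pt_eq]
        simpa using h1
      have hadd : (((0:ℤ)).toNat, ((0:ℤ)).toNat, ((0:ℤ)).toNat) ∈ AddBoxes lam := by
        refine mem_addBoxes_of lam hlam 0 0 0 le_rfl le_rfl le_rfl ?_ ?_ ?_ ?_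
        · unfold ind
          rw [if_neg]
          rintro ⟨-, -, -, hm⟩
          exact h00 (by simpa using hm)
        · intro h; exact absurd h (by omega)
        · intro h; exact absurd h (by omega)
        · intro h; exact absurd h (by omega)
      have hdg0 : dg (((0:ℤ)).toNat, ((0:ℤ)).toNat, ((0:ℤ)).toNat) = ((0,0) : ℤ × ℤ) := by
        simp [dg]
      have h1 := hsge _ (Set.mem_union_left _ hadd) hdg0
      have h2 : (0:ℤ) ≤ ∑ k ∈ Finset.Icc (-N) N, G lam ((0,0) : ℤ × ℤ) k :=
        Finset.sum_nonneg hGnn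
      omega
  · rw [if_neg hq]
    by_cases hdef : ∃ k ∈ Finset.Icc (-N) N, G lam q k < 0
    · obtain ⟨ks, hks, hksneg⟩ := hdef
      obtain ⟨⟨hp1, hp2, hp3⟩, halt⟩ := hdefic ks hksneg
      have huniq : ∀ k ∈ Finset.Icc (-N) N, k ≠ ks → 0 ≤ G lam q k := by
        intro k _ hne
        by_contra hneg
        obtain ⟨⟨hq1, hq2, hq3⟩, _⟩ := hdefic k (by omega)
        omega
      have hsingle : G lam q ks ≤ ∑ k ∈ Finset.Icc (-N) N, G lam q k := by
        have := Finset.sum_le_sum_of_subset_of_nonneg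
          (Finset.singleton_subset_iff.mpr hks)
          (fun i hi hni => huniq i hi (by simpa using hni))
        simpa using this
      have hlb := hGlb ks
      rcases halt with hin | haddb
      · have hksIcc := Finset.mem_Icc.mp hks
        have hz1 : ks + 1 ≤ zmax lam := by
          have := ind_le_zmax lam _ _ _ hin
          omega
        have hex2 : ∃ k ∈ Finset.Icc (-N) N, ind lam (pt q k) = 1 := by
          refine ⟨ks + 1, Finset.mem_Icc.mpr ⟨by omega, by omega⟩, ?_⟩
          rw [pt_eq]
          rw [show q.1 + (ks + 1) = q.1 + ks + 1 by ring,
            show q.2 + (ks + 1) = q.2 + ks + 1 by ring]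
          exact hin
        rcases top_lemma lam hlam q N hN hex2 with ⟨b, hb, hdgb⟩ |
          ⟨k0, hk0, ⟨hc1, hc2, hc3⟩, hG1⟩
        · have h1 := hsge b hb hdgb
          omega
        · have hne : k0 ≠ ks := by omega
          have hpair : G lam q ks + G lam q k0 ≤ ∑ k ∈ Finset.Icc (-N) N, G lam q k := by
            have hsub : ({ks, k0} : Finset ℤ) ⊆ Finset.Icc (-N) N := by
              intro i hi
              simp only [Finset.mem_insert, Finset.mem_singleton] at hi
              rcases hi with rfl | rfl
              · exact hks
              · exact hk0
            have := Finset.sum_le_sum_of_subset_of_nonneg hsub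
              (fun i hi hni => by
                refine huniq i hi ?_
                simp only [Finset.mem_insert, Finset.mem_singleton] at hni
                push_neg at hni
                exact hni.1)
            rw [Finset.sum_pair (by omega : ks ≠ k0)] at this
            exact this
          omega
      · have hdgb : dg ((q.1 + ks + 1).toNat, (q.2 + ks + 1).toNat, (ks + 1).toNat) = q := by
          simp only [dg]
          rw [Prod.ext_iff]
          constructor <;> simp <;> omega
        have h1 := hsge _ (Set.mem_union_left _ haddb) hdgb
        omega
    · push_neg at hdef
      have h2 : (0:ℤ) ≤ ∑ k ∈ Finset.Icc (-N) N, G lam q k :=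
        Finset.sum_nonneg fun k hk => hdef k hk
      omega

end Comb4

section Final

variable (lam : Finset Box3)

lemma shift_iff (a q r s : ℤ × ℤ) (hrs : r + s = 0) : (a + r = q) ↔ (a = q + s) := by
  constructor
  · intro h
    rw [← h, add_assoc, hrs, add_zero]
  · intro h
    rw [h, add_assoc, show s + r = 0 by rw [add_comm]; exact hrs, add_zero]

lemma mB_apply (b : Box3) (q : ℤ × ℤ) :
    (mB b) q = ((if dg b = q + (1, 0) then (1:ℤ) else 0)
        + (if dg b = q + (0, 1) then (1:ℤ) else 0)
        + (if dg b = q + (-1, -1) then (1:ℤ) else 0))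
      - ((if dg b = q + (-1, 0) then (1:ℤ) else 0)
        + (if dg b = q + (0, -1) then (1:ℤ) else 0)
        + (if dg b = q + (1, 1) then (1:ℤ) else 0)) := by
  have h1 := shift_iff (dg b) q ((-1 : ℤ), (0 : ℤ)) ((1 : ℤ), (0 : ℤ))
    (by rw [Prod.ext_iff]; constructor <;> norm_num)
  have h2 := shift_iff (dg b) q ((0 : ℤ), (-1 : ℤ)) ((0 : ℤ), (1 : ℤ))
    (by rw [Prod.ext_iff]; constructor <;> norm_num)
  have h3 := shift_iff (dg b) q ((1 : ℤ), (1 : ℤ)) ((-1 : ℤ), (-1 : ℤ))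
    (by rw [Prod.ext_iff]; constructor <;> norm_num)
  have h4 := shift_iff (dg b) q ((1 : ℤ), (0 : ℤ)) ((-1 : ℤ), (0 : ℤ))
    (by rw [Prod.ext_iff]; constructor <;> norm_num)
  have h5 := shift_iff (dg b) q ((0 : ℤ), (1 : ℤ)) ((0 : ℤ), (-1 : ℤ))
    (by rw [Prod.ext_iff]; constructor <;> norm_num)
  have h6 := shift_iff (dg b) q ((-1 : ℤ), (-1 : ℤ)) ((1 : ℤ), (1 : ℤ))
    (by rw [Prod.ext_iff]; constructor <;> norm_num)
  simp only [mB, Finsupp.sub_apply, Finsupp.add_apply, Finsupp.single_apply]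
  rw [if_congr h1 rfl rfl, if_congr h2 rfl rfl, if_congr h3 rfl rfl, if_congr h4 rfl rfl,
    if_congr h5 rfl rfl, if_congr h6 rfl rfl]
  ring

lemma Mf_apply (S : Finset Box3) (q : ℤ × ℤ) :
    (Finsupp.single ((0, 0) : ℤ × ℤ) (-1 : ℤ) + ∑ b ∈ lam, mB b
      + ∑ b ∈ S, Finsupp.single (dg b) (1 : ℤ)) q
    = (if ((0, 0) : ℤ × ℤ) = q then (-1 : ℤ) else 0)
      + (cnt lam (q + (1, 0)) + cnt lam (q + (0, 1)) + cnt lam (q + (-1, -1))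
        - cnt lam (q + (-1, 0)) - cnt lam (q + (0, -1)) - cnt lam (q + (1, 1)))
      + ∑ b ∈ S, (if dg b = q then (1 : ℤ) else 0) := by
  rw [Finsupp.add_apply, Finsupp.add_apply, Finsupp.single_apply,
    Finset.sum_apply', Finset.sum_apply']
  have hmid : ∑ b ∈ lam, (mB b) q
      = cnt lam (q + (1, 0)) + cnt lam (q + (0, 1)) + cnt lam (q + (-1, -1))
        - cnt lam (q + (-1, 0)) - cnt lam (q + (0, -1)) - cnt lam (q + (1, 1)) := by
    rw [Finset.sum_congr rfl (fun b _ => mB_apply b q)]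
    simp only [Finset.sum_sub_distrib, Finset.sum_add_distrib]
    simp only [cnt]
    ring
  have hright : ∑ b ∈ S, (Finsupp.single (dg b) (1 : ℤ)) q
      = ∑ b ∈ S, (if dg b = q then (1 : ℤ) else 0) :=
    Finset.sum_congr rfl fun b _ => Finsupp.single_apply
  rw [hmid, hright]

lemma Hfun_eq_Phi (S : Finset Box3) :
    Hfun lam * ∏ b ∈ S, (RatFunc.X - RatFunc.C (boxWeight b))
      = Phi (Finsupp.single ((0, 0) : ℤ × ℤ) (-1 : ℤ) + ∑ b ∈ lam, mB b
          + ∑ b ∈ S, Finsupp.single (dg b) (1 : ℤ)) := by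
  rw [Phi_add, Phi_add, Phi_single, Phi_sum, Phi_sum]
  rw [Hfun]
  congr 1
  congr 1
  · rw [zpow_neg_one, fK, wz_zero]
  · exact Finset.prod_congr rfl fun b _ => box_factor b
  · refine Finset.prod_congr rfl fun b _ => ?_
    rw [Phi_single, zpow_one, fK, boxWeight_eq]

end Final

end HPoles

/-- **Poles of `H_λ(z)` are simple and located at the weights of the addible and
removable boxes of the 3d partition `λ`**: the set `Add(λ) ∪ Rem(λ)` is finite, and
`H_λ(z) · ∏_{■ ∈ Add(λ) ∪ Rem(λ)} (z − x_■)` is a polynomial in `K[z]`. -/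
theorem Hfun_poles_simple_at_addible_removable
    (lam : Finset Box3) (hlam : IsDownwardClosed (↑lam : Set Box3)) :
    ∃ S : Finset Box3, (↑S : Set Box3) = AddBoxes lam ∪ RemBoxes lam ∧
      ∃ P : Polynomial KK,
        Hfun lam * ∏ b ∈ S, (RatFunc.X - RatFunc.C (boxWeight b))
          = algebraMap (Polynomial KK) (RatFunc KK) P := by
  classical
  have hfin := HPoles.addrem_finite lam
  refine ⟨hfin.toFinset, hfin.coe_toFinset, ?_⟩
  set S := hfin.toFinset with hSdef
  have hScond : ∀ b : Box3, b ∈ AddBoxes lam ∪ RemBoxes lam → b ∈ S :=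
    fun b hb => hfin.mem_toFinset.mpr hb
  set Mf := Finsupp.single ((0, 0) : ℤ × ℤ) (-1 : ℤ) + ∑ b ∈ lam, HPoles.mB b
      + ∑ b ∈ S, Finsupp.single (HPoles.dg b) (1 : ℤ) with hMfdef
  have hpos : ∀ p : ℤ × ℤ, 0 ≤ Mf p := by
    intro p
    rw [hMfdef, HPoles.Mf_apply]
    have hk := HPoles.key_ineq lam hlam S hScond p
    by_cases hc : ((0, 0) : ℤ × ℤ) = p
    · rw [if_pos hc] at hk ⊢
      omega
    · rw [if_neg hc] at hk ⊢
      omega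
  refine ⟨Mf.prod fun p e => (Polynomial.X - Polynomial.C (HPoles.wz p)) ^ e.toNat, ?_⟩
  rw [HPoles.Hfun_eq_Phi lam S, ← hMfdef]
  rw [map_finsuppProd]
  unfold HPoles.Phi
  refine Finsupp.prod_congr fun p hp => ?_
  rw [map_pow, ← HPoles.fK_eq, ← zpow_natCast, Int.toNat_of_nonneg (hpos p)]
end

section
/- For every 3d partition λ, the weights of the addible and removable boxes of λ are pairwise distinct: the sets Add(λ) and Rem(λ) are disjoint, and the map ■ = (i,j,k) ↦ x_■ = χ + i·ℏ₁ + j·ℏ₂ + k·ℏ₃ is injective on Add(λ) ∪ Rem(λ). (Note that this map is not injective on all of ℕ³, since ℏ₁ + ℏ₂ + ℏ₃ = 0 makes boxes differing by a multiple of (1,1,1) have equal weight.) -/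
lemma hb_indep (a c : ℤ) (h : (a : KK) * hb1 + (c : KK) * hb2 = 0) : a = 0 ∧ c = 0 := by
  have hinj := IsFractionRing.injective (MvPolynomial (Fin 3) ℚ) KK
  have h' : algebraMap (MvPolynomial (Fin 3) ℚ) KK
      ((a : MvPolynomial (Fin 3) ℚ) * MvPolynomial.X 0
        + (c : MvPolynomial (Fin 3) ℚ) * MvPolynomial.X 1)
      = algebraMap (MvPolynomial (Fin 3) ℚ) KK 0 := by
    rw [map_add, map_mul, map_mul, map_intCast, map_intCast, map_zero]
    simpa [hb1, hb2] using h
  have h0 := hinj h'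
  constructor
  · have := congrArg (MvPolynomial.aeval (fun i : Fin 3 => if i = 0 then (1:ℚ) else 0)) h0
    simp at this
    exact_mod_cast this
  · have := congrArg (MvPolynomial.aeval (fun i : Fin 3 => if i = 1 then (1:ℚ) else 0)) h0
    simp at this
    exact_mod_cast this

lemma geom (lam : Finset Box3) (hlam : IsDownwardClosed (↑lam : Set Box3))
    (b b' : Box3) (hb : b ∈ AddBoxes lam ∪ RemBoxes lam)
    (hb' : b' ∈ AddBoxes lam ∪ RemBoxes lam) (t : ℕ) (ht : 1 ≤ t)
    (e1 : b'.1 = b.1 + t) (e2 : b'.2.1 = b.2.1 + t) (e3 : b'.2.2 = b.2.2 + t) :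
    False := by
  rcases hb' with ⟨hb'notin, hdc'⟩ | ⟨hb'in, _⟩
  · rcases hb with ⟨hbnotin, _⟩ | ⟨hbin, hdcb⟩
    · have hmem : b ∈ (↑(insert b' lam) : Set Box3) :=
        hdc' b' (by simp) b (by omega) (by omega) (by omega)
      simp only [Finset.coe_insert, Set.mem_insert_iff, Finset.mem_coe] at hmem
      rcases hmem with rfl | hmem
      · omega
      · exact hbnotin hmem
    · set c : Box3 := (b.1 + t, b.2.1 + t, b.2.2) with hc
      have hcmem : c ∈ (↑(insert b' lam) : Set Box3) :=
        hdc' b' (by simp) c (by simp [hc]; omega) (by simp [hc]; omega) (by simp [hc]; omega)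
      simp only [Finset.coe_insert, Set.mem_insert_iff, Finset.mem_coe] at hcmem
      have hclam : c ∈ lam := by
        rcases hcmem with hcb | h
        · exfalso
          have := congrArg (fun x : Box3 => x.2.2) hcb
          simp [hc] at this
          omega
        · exact h
      have hcne : c ≠ b := by
        intro hcb
        have := congrArg (fun x : Box3 => x.1) hcb
        simp [hc] at this
        omega
      have hcerase : c ∈ (↑(lam.erase b) : Set Box3) := by
        simp [Finset.mem_erase, hcne, hclam]
      have hbmem : b ∈ (↑(lam.erase b) : Set Box3) :=
        hdcb c hcerase b (by simp [hc]) (by simp [hc]) (by simp [hc])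
      simp [Finset.mem_erase] at hbmem
  · rcases hb with ⟨hbnotin, _⟩ | ⟨hbin, hdcb⟩
    · exact hbnotin (hlam b' hb'in b (by omega) (by omega) (by omega))
    · have hne : b' ≠ b := by
        intro h
        have := congrArg (fun x : Box3 => x.1) h
        change b'.1 = b.1 at this
        omega
      have hmem : b' ∈ (↑(lam.erase b) : Set Box3) := by
        simp [Finset.mem_erase, hne, hb'in]
      have hbmem : b ∈ (↑(lam.erase b) : Set Box3) :=
        hdcb b' hmem b (by omega) (by omega) (by omega)
      simp [Finset.mem_erase] at hbmem

/-- **The weights of the addible and removable boxes of a 3d partition are pairwise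
distinct**: `Add(λ)` and `Rem(λ)` are disjoint, and `■ ↦ x_■` is injective on
`Add(λ) ∪ Rem(λ)`. -/
theorem boxWeight_injOn_addible_removable
    (lam : Finset Box3) (hlam : IsDownwardClosed (↑lam : Set Box3)) :
    AddBoxes lam ∩ RemBoxes lam = ∅ ∧
      Set.InjOn boxWeight (AddBoxes lam ∪ RemBoxes lam) := by
  constructor
  · ext b
    simp only [Set.mem_inter_iff, Set.mem_empty_iff_false, iff_false]
    rintro ⟨⟨h1, -⟩, ⟨h2, -⟩⟩
    exact h1 h2
  · intro b hb b' hb' heq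
    have hkey := hb_indep ((b.1 : ℤ) - b.2.2 - b'.1 + b'.2.2)
        ((b.2.1 : ℤ) - b.2.2 - b'.2.1 + b'.2.2) ?_
    · obtain ⟨h1, h2⟩ := hkey
      rcases Nat.lt_trichotomy b.2.2 b'.2.2 with h | h | h
      · exact absurd (geom lam hlam b b' hb hb' (b'.2.2 - b.2.2) (by omega)
          (by omega) (by omega) (by omega)) (by simp)
      · obtain ⟨i, j, k⟩ := b
        obtain ⟨i', j', k'⟩ := b'
        simp only [Prod.mk.injEq]
        simp only at h1 h2 h
        omega
      · exact absurd (geom lam hlam b' b hb' hb (b.2.2 - b'.2.2) (by omega)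
          (by omega) (by omega) (by omega)) (by simp)
    · unfold boxWeight hb3 at heq
      push_cast
      linear_combination heq
end
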